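/- Let L be a function field in one variable over ℂ, let α_1,…,α_r be nonzero elements of L which are multiplicatively independent modulo ℂ (no nontrivial integer power product of them lies in ℂ), and let α_0 ∈ L*. If there are nonzero integers k_1,…,k_r such that α_1^{k_1} α_2^{k_2} ⋯ α_r^{k_r} = α_0, then for every i ∈ {1,…,r}, |k_i| ≤ ((r+1)!/ℋ(α_i)) · ℋ(α_1)⋯ℋ(α_r) · ℋ(α_0). -/

import Mathlib

open scoped BigOperators Classical

/-- The height `ℋ(f) = -∑_{μ ∈ 𝓜_L} min{0, μ(f)}` of an element of a function field,
relative to a family `val` of discrete valuations (the places of `L`). -/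
noncomputable def ffHeight {L V : Type*} [Field L] (val : V → L → ℤ) (f : L) : ℕ :=
  (-(∑ᶠ v, min 0 (val v f))).toNat

/-! The valuation vectors `(μ(α_j))_μ` are linearly independent over `ℚ`: an integral relation
among them is a power product of the `α_j` with all valuations zero, hence a constant. So some
`r` places `μ_1, …, μ_r` give a nonsingular integer matrix `A = (μ_l(α_j))`, and
`A k = (μ_l(α_0))_l`. By Cramer's rule `det A · k_i` is the determinant of `A` with column `i`
replaced by the valuations of `α_0`; as `|μ(f)| ≤ ℋ(f)` by the sum formula and `|det A| ≥ 1`,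
expanding that determinant gives `|k_i| ≤ r! · ℋ(α_0) · ∏_{j ≠ i} ℋ(α_j)`. -/

namespace Matrix

open scoped Matrix

variable {n : Type*} [Fintype n] [DecidableEq n]

theorem det_le_factorial_mul_prod {R S : Type*} [CommRing R] [Nontrivial R] [CommRing S]
    [LinearOrder S] [IsStrictOrderedRing S] {A : Matrix n n R} {abv : AbsoluteValue R S} {B : n → S}
    (hB : ∀ i j, abv (A i j) ≤ B j) : abv A.det ≤ (Fintype.card n).factorial * ∏ j, B j :=
  calc
    abv A.det = abv (∑ σ : Equiv.Perm n, Equiv.Perm.sign σ • ∏ j, A (σ j) j) :=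
      congr_arg abv (det_apply _)
    _ ≤ ∑ σ : Equiv.Perm n, abv (Equiv.Perm.sign σ • ∏ j, A (σ j) j) := abv.sum_le _ _
    _ = ∑ σ : Equiv.Perm n, ∏ j, abv (A (σ j) j) :=
      Finset.sum_congr rfl fun σ _ => by rw [abv.map_units_int_smul, abv.map_prod]
    _ ≤ ∑ _σ : Equiv.Perm n, ∏ j, B j := by gcongr with σ _ j; exact hB _ _
    _ = (Fintype.card n).factorial * ∏ j, B j := by simp [Fintype.card_perm]

theorem det_mul_apply_eq_det_updateCol {R : Type*} [CommRing R] {A : Matrix n n R}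
    {x b : n → R} (h : A *ᵥ x = b) (i : n) :
    A.det * x i = (A.updateCol i b).det := by
  rw [← cramer_apply, ← h, cramer_eq_adjugate_mulVec, mulVec_mulVec, adjugate_mul, smul_mulVec,
    one_mulVec, Pi.smul_apply, smul_eq_mul]

theorem pos_of_abs_le_of_det_ne_zero {R : Type*} [CommRing R] [LinearOrder R]
    [IsStrictOrderedRing R] {A : Matrix n n R} (hA : A.det ≠ 0) {H : n → R}
    (hAH : ∀ i j, |A i j| ≤ H j) (j : n) : 0 < H j := by
  by_contra! hj
  exact hA (det_eq_zero_of_column_eq_zero j fun i => abs_nonpos_iff.mp ((hAH i j).trans hj))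

theorem abs_le_factorial_mul_prod_of_mulVec_eq {A : Matrix n n ℤ} (hA : A.det ≠ 0)
    {x b : n → ℤ} (h : A *ᵥ x = b) {H : n → ℤ} {H₀ : ℤ} (hAH : ∀ i j, |A i j| ≤ H j)
    (hbH : ∀ i, |b i| ≤ H₀) (i : n) :
    |x i| ≤ (Fintype.card n).factorial * H₀ * ∏ j ∈ Finset.univ.erase i, H j :=
  calc |x i| ≤ |A.det| * |x i| := le_mul_of_one_le_left (abs_nonneg _) (Int.one_le_abs hA)
    _ = |(A.updateCol i b).det| := by rw [← abs_mul, det_mul_apply_eq_det_updateCol h]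
    _ ≤ (Fintype.card n).factorial * ∏ j, Function.update H i H₀ j :=
      det_le_factorial_mul_prod (abv := AbsoluteValue.abs) fun i' j => by
        rcases eq_or_ne j i with rfl | hj
        · simpa using hbH i'
        · simpa [updateCol_apply, hj] using hAH i' j
    _ = (Fintype.card n).factorial * H₀ * ∏ j ∈ Finset.univ.erase i, H j := by
      rw [Finset.prod_update_of_mem (Finset.mem_univ i), Finset.sdiff_singleton_eq_erase,
        mul_assoc]

end Matrix

theorem span_range_rows_eq_top {K V ι : Type*} [Field K] [Fintype ι] {c : ι → V → K}
    (hc : LinearIndependent K c) :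
    Submodule.span K (Set.range fun v j => c j v) = ⊤ := by
  by_contra hne
  obtain ⟨f, hf0, hf⟩ := Submodule.exists_dual_map_eq_bot_of_lt_top (lt_top_iff_ne_top.mpr hne)
    inferInstance
  have hrow (v : V) : f (fun j => c j v) = 0 := by
    have := Submodule.mem_map_of_mem (f := f)
      (Submodule.subset_span (R := K) (Set.mem_range_self (f := fun v j => c j v) v))
    rwa [hf, Submodule.mem_bot] at this
  have hcoef : ∀ j, f (Pi.single j 1) = 0 := by
    refine Fintype.linearIndependent_iff.mp hc _ (funext fun v => ?_)
    have := hrow v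
    have hsingle (j : ι) : (fun j' => if j = j' then (1 : K) else 0) = Pi.single j 1 := by
      funext j'; simp [Pi.single_apply, eq_comm]
    rw [LinearMap.pi_apply_eq_sum_univ f] at this
    simpa [hsingle, mul_comm] using this
  exact hf0 (LinearMap.pi_ext' fun j => LinearMap.ext_ring (hcoef j))

theorem exists_det_ne_zero_of_linearIndependent {K V ι : Type*} [Field K] [Fintype ι]
    [DecidableEq ι] {c : ι → V → K} (hc : LinearIndependent K c) :
    ∃ s : ι → V, (Matrix.of fun i j => c j (s i)).det ≠ 0 := by
  obtain ⟨κ, a, -, hspan, hli⟩ := exists_linearIndependent' K (fun v j => c j v)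
  rw [span_range_rows_eq_top hc] at hspan
  let e : κ ≃ ι := (Module.Basis.mk hli hspan.ge).indexEquiv (Pi.basisFun K ι)
  refine ⟨a ∘ e.symm, ?_⟩
  have hrows : LinearIndependent K (Matrix.of fun i j => c j (a (e.symm i))) :=
    hli.comp e.symm e.symm.injective
  exact ((Matrix.isUnit_iff_isUnit_det _).mp
    (Matrix.linearIndependent_rows_iff_isUnit.mp hrows)).ne_zero

theorem abs_le_neg_finsum_min_zero {V : Type*} {f : V → ℤ} (hf : (Function.support f).Finite)
    (hsum : ∑ᶠ v, f v = 0) (v : V) : |f v| ≤ -∑ᶠ w, min 0 (f w) := by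
  have hsupp {g : ℤ → ℤ} (hg : g 0 = 0) : (Function.support fun w => g (f w)).Finite :=
    hf.subset (Function.support_subset_iff'.mpr fun w hw => by
      rw [Function.notMem_support.mp hw, hg])
  have hmin := hsupp (g := fun a => min 0 a) rfl
  have hmax := hsupp (g := fun a => max 0 a) rfl
  have hneg := hsupp (g := fun a => -min 0 a) rfl
  have hsplit : ∑ᶠ w, max 0 (f w) = -∑ᶠ w, min 0 (f w) := by
    rw [eq_neg_iff_add_eq_zero, ← finsum_add_distrib hmax hmin, ← hsum]
    exact finsum_congr fun w => by omega
  rw [abs_le]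
  constructor
  · have : -min 0 (f v) ≤ ∑ᶠ w, -min 0 (f w) :=
      single_le_finsum v hneg fun w => by simp
    rw [finsum_neg_distrib] at this
    omega
  · have : max 0 (f v) ≤ ∑ᶠ w, max 0 (f w) :=
      single_le_finsum v hmax fun w => le_max_left _ _
    omega

theorem abs_val_le_ffHeight {L V : Type*} [Field L] {val : V → L → ℤ} {x : L}
    (hsupp : (Function.support fun v => val v x).Finite) (hsum : ∑ᶠ v, val v x = 0) (v : V) :
    |val v x| ≤ ffHeight val x :=
  (abs_le_neg_finsum_min_zero hsupp hsum v).trans (Int.self_le_toNat _)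

theorem map_prod_zpow_of_map_mul {L ι : Type*} [Field L] {w : L → ℤ}
    (hw : ∀ x y, x ≠ 0 → y ≠ 0 → w (x * y) = w x + w y) {α : ι → L} (hα : ∀ j, α j ≠ 0)
    (s : Finset ι) (n : ι → ℤ) :
    w (∏ j ∈ s, α j ^ n j) = ∑ j ∈ s, n j * w (α j) := by
  let φ : Lˣ →* Multiplicative ℤ := MonoidHom.mk' (fun u => Multiplicative.ofAdd (w u))
    fun u u' => by simp [hw _ _ u.ne_zero u'.ne_zero, ofAdd_add]
  have hprod : ∏ j ∈ s, α j ^ n j = ((∏ j ∈ s, Units.mk0 (α j) (hα j) ^ n j : Lˣ) : L) := by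
    push_cast; rfl
  rw [hprod]
  calc w ↑(∏ j ∈ s, Units.mk0 (α j) (hα j) ^ n j)
      = Multiplicative.toAdd (φ (∏ j ∈ s, Units.mk0 (α j) (hα j) ^ n j)) := rfl
    _ = ∑ j ∈ s, n j • Multiplicative.toAdd (φ (Units.mk0 (α j) (hα j))) := by
      simp only [map_prod, map_zpow, toAdd_prod, toAdd_zpow]
    _ = ∑ j ∈ s, n j * w (α j) := rfl

theorem linearIndependent_val_of_not_exists_zpow_eq_algebraMap {K L V ι : Type*}
    [CommSemiring K] [Field L] [Algebra K L] [Fintype ι] {val : V → L → ℤ}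
    (hval_mul : ∀ v (x y : L), x ≠ 0 → y ≠ 0 → val v (x * y) = val v x + val v y)
    (hval_const : ∀ x : L, x ≠ 0 → (∀ v, val v x = 0) → ∃ c : K, algebraMap K L c = x)
    {α : ι → L} (hα0 : ∀ i, α i ≠ 0)
    (hindep : ¬ ∃ n : ι → ℤ, n ≠ 0 ∧ ∃ c : K, algebraMap K L c = ∏ i, α i ^ n i) :
    LinearIndependent ℚ fun j v => (val v (α j) : ℚ) := by
  rw [← LinearIndependent.iff_fractionRing ℤ ℚ, Fintype.linearIndependent_iff]
  intro n hn
  by_contra hne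
  refine hindep ⟨n, fun h => hne fun j => by simp [h], hval_const _ ?_ fun v => ?_⟩
  · exact Finset.prod_ne_zero_iff.mpr fun j _ => zpow_ne_zero _ (hα0 j)
  · rw [map_prod_zpow_of_map_mul (hval_mul v) hα0]
    have := congrFun hn v
    simp only [Finset.sum_apply, zsmul_eq_mul, Pi.mul_apply, Pi.intCast_apply,
      Pi.zero_apply] at this
    exact_mod_cast this

theorem stmt_10_general
    (L : Type*) [Field L] [Algebra ℂ L]
    (V : Type*) (val : V → L → ℤ)
    (hval_mul : ∀ v (x y : L), x ≠ 0 → y ≠ 0 → val v (x * y) = val v x + val v y)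
    (hval_supp : ∀ x : L, x ≠ 0 → (Function.support fun v => val v x).Finite)
    (hval_sum : ∀ x : L, x ≠ 0 → ∑ᶠ v, val v x = 0)
    (hval_const : ∀ x : L, x ≠ 0 → ((∀ v, val v x = 0) ↔ ∃ c : ℂ, algebraMap ℂ L c = x))
    (r : ℕ) (α : Fin r → L) (hα0 : ∀ i, α i ≠ 0)
    -- `α_1, …, α_r` are multiplicatively independent modulo `ℂ`
    (hindep : ¬ ∃ n : Fin r → ℤ, n ≠ 0 ∧ ∃ c : ℂ, algebraMap ℂ L c = ∏ i, α i ^ n i)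
    (α₀ : L)
    (k : Fin r → ℤ)
    (hrel : (∏ i, α i ^ k i) = α₀) :
    ∀ i, (|k i| : ℝ) ≤
      ((r + 1).factorial : ℝ) / (ffHeight val (α i) : ℝ)
        * (∏ j, (ffHeight val (α j) : ℝ)) * (ffHeight val α₀ : ℝ) := by
  intro i
  have hα₀ : α₀ ≠ 0 := hrel ▸ Finset.prod_ne_zero_iff.mpr fun j _ => zpow_ne_zero _ (hα0 j)
  have hheight {x : L} (hx : x ≠ 0) (v : V) : |val v x| ≤ ffHeight val x :=
    abs_val_le_ffHeight (hval_supp x hx) (hval_sum x hx) v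
  obtain ⟨s, hdet⟩ := exists_det_ne_zero_of_linearIndependent
    (linearIndependent_val_of_not_exists_zpow_eq_algebraMap hval_mul
      (fun x hx => (hval_const x hx).mp) hα0 hindep)
  set A : Matrix (Fin r) (Fin r) ℤ := Matrix.of fun i' j => val (s i') (α j)
  have hA : A.det ≠ 0 := by
    rw [← Int.cast_ne_zero (α := ℚ), Int.cast_det]
    exact hdet
  have hAk : A.mulVec k = fun i' => val (s i') α₀ := funext fun i' => by
    simp [A, ← hrel, map_prod_zpow_of_map_mul (hval_mul _) hα0, Matrix.mulVec, dotProduct,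
      mul_comm]
  have hAH (i' j) : |A i' j| ≤ ffHeight val (α j) := hheight (hα0 j) _
  have hbound := Matrix.abs_le_factorial_mul_prod_of_mulVec_eq hA hAk hAH
    (fun i' => hheight hα₀ (s i')) i
  have hpos := Matrix.pos_of_abs_le_of_det_ne_zero hA hAH i
  rw [Fintype.card_fin] at hbound
  rw [← Finset.mul_prod_erase _ _ (Finset.mem_univ i)]
  calc (|k i| : ℝ) ≤ r.factorial * ffHeight val α₀ * ∏ j ∈ Finset.univ.erase i,
        (ffHeight val (α j) : ℝ) := by exact_mod_cast hbound
    _ ≤ (r + 1).factorial * ffHeight val α₀ * ∏ j ∈ Finset.univ.erase i,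
        (ffHeight val (α j) : ℝ) := by
      gcongr
      exact Nat.le_succ r
    _ = _ := by
      have : (ffHeight val (α i) : ℝ) ≠ 0 := by exact_mod_cast hpos.ne'
      field_simp

/-- **Lemma (multiplicative dependence bound, function field case).**
Let `L` be a function field in one variable over `ℂ` (a finite extension of `ℂ(z)`),
with set of places `V` and valuations `val` satisfying the usual axioms
(additivity, finiteness of support, sum formula, and: an element has all valuations zero
iff it is a constant).  Let `α_1, …, α_r ∈ L*` be multiplicatively independent modulo `ℂ`
and `α_0 ∈ L*`.  If there are nonzero integers `k_1, …, k_r` with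
`α_1^{k_1} ⋯ α_r^{k_r} = α_0`, then
`|k_i| ≤ ((r+1)!/ℋ(α_i)) · ℋ(α_1)⋯ℋ(α_r) · ℋ(α_0)` for every `i`. -/
theorem stmt_10
    (L : Type*) [Field L] [Algebra ℂ L] [Algebra (RatFunc ℂ) L]
    [IsScalarTower ℂ (RatFunc ℂ) L] [FiniteDimensional (RatFunc ℂ) L]
    (V : Type*) (val : V → L → ℤ)
    (hval_mul : ∀ v (x y : L), x ≠ 0 → y ≠ 0 → val v (x * y) = val v x + val v y)
    (hval_supp : ∀ x : L, x ≠ 0 → (Function.support fun v => val v x).Finite)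
    (hval_sum : ∀ x : L, x ≠ 0 → ∑ᶠ v, val v x = 0)
    (hval_const : ∀ x : L, x ≠ 0 → ((∀ v, val v x = 0) ↔ ∃ c : ℂ, algebraMap ℂ L c = x))
    (r : ℕ) (α : Fin r → L) (hα0 : ∀ i, α i ≠ 0)
    -- `α_1, …, α_r` are multiplicatively independent modulo `ℂ`
    (hindep : ¬ ∃ n : Fin r → ℤ, n ≠ 0 ∧ ∃ c : ℂ, algebraMap ℂ L c = ∏ i, α i ^ n i)
    (α₀ : L) (hα₀ : α₀ ≠ 0)
    (k : Fin r → ℤ) (hk : ∀ i, k i ≠ 0)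
    (hrel : (∏ i, α i ^ k i) = α₀) :
    ∀ i, (|k i| : ℝ) ≤
      ((r + 1).factorial : ℝ) / (ffHeight val (α i) : ℝ)
        * (∏ j, (ffHeight val (α j) : ℝ)) * (ffHeight val α₀ : ℝ) :=
  stmt_10_general L V val hval_mul hval_supp hval_sum hval_const r α hα0 hindep α₀ k hrel
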